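/- Every P in R^{2n×2n} with P^2 = P, P^+ = P, and rank(P) = 2k can be written as P = UU^+ for some U in SpSt(2n,2k). -/

import Mathlib

open Matrix

noncomputable section

/-- The standard symplectic matrix `J = [[0, I],[-I, 0]]` of size `2m`. -/
def Jmat (m : ℕ) : Matrix (Fin m ⊕ Fin m) (Fin m ⊕ Fin m) ℝ :=
  Matrix.fromBlocks 0 1 (-1) 0

/-- The symplectic inverse `A⁺ = J₂ₖᵀ Aᵀ J₂ₙ` of a `2n × 2k` real matrix. -/
def sympInv {n k : ℕ} (A : Matrix (Fin n ⊕ Fin n) (Fin k ⊕ Fin k) ℝ) :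
    Matrix (Fin k ⊕ Fin k) (Fin n ⊕ Fin n) ℝ :=
  (Jmat k)ᵀ * Aᵀ * Jmat n

/-!
Since `P⁺ = P`, the idempotent `P` is self-adjoint for the symplectic form `ω(x, y) = xᵀ J y`,
so a vector of `range P` that is `ω`-orthogonal to `range P` is `ω`-orthogonal to everything:
`ω` restricts to a symplectic form on the `2k`-dimensional space `range P`. The vectors of a
Darboux basis of it are the columns of a `U` with `Uᵀ J U = J`, i.e. `U⁺ U = 1`, and `P U = U`.
Then `Q = U U⁺` is idempotent with `Q⁺ = Q` and `P Q = Q P = Q`, so `P - Q` is idempotent of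
trace `rank P - tr (U⁺ U) = 2k - 2k = 0`, hence zero.
-/

open Module

namespace LinearMap.BilinForm

theorem nondegenerate_restrict_range_of_isIdempotentElem {R M : Type*}
    [CommRing R] [AddCommGroup M] [Module R M] {B : LinearMap.BilinForm R M}
    {p : Module.End R M} (hB : B.Nondegenerate) (hrefl : B.IsRefl) (hp : IsIdempotentElem p)
    (hadj : LinearMap.IsAdjointPair B B p p) :
    (B.restrict (LinearMap.range p)).Nondegenerate := by
  refine B.nondegenerate_restrict_of_disjoint_orthogonal hrefl (Submodule.disjoint_def.mpr ?_)
  rintro _ ⟨u, rfl⟩ hu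
  refine hB.1 _ fun z => ?_
  rw [← hp.eq, Module.End.mul_apply, hadj]
  exact hrefl _ _ (hu _ ⟨z, rfl⟩)

variable {K V : Type*} [Field K] [AddCommGroup V] [Module K V] {B : LinearMap.BilinForm K V}
  {x y : V}

lemma apply_smul_add_smul_of_apply_eq_one (hB : B.IsAlt) (hxy : B x y = 1) (a b : K) :
    B x (a • x + b • y) = b ∧ B y (a • x + b • y) = -a := by
  have hyx : B y x = -1 := by rw [← hB.neg_eq, hxy]
  simp [hB.self_eq_zero, hxy, hyx]

lemma linearIndependent_pair_of_apply_eq_one (hB : B.IsAlt) (hxy : B x y = 1) :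
    LinearIndependent K ![x, y] := by
  refine LinearIndependent.pair_iff.mpr fun a b hab => ?_
  have := apply_smul_add_smul_of_apply_eq_one hB hxy a b
  simp only [hab, map_zero] at this
  exact ⟨neg_eq_zero.mp this.2.symm, this.1.symm⟩

lemma finrank_span_pair_of_apply_eq_one (hB : B.IsAlt) (hxy : B x y = 1) :
    finrank K (Submodule.span K {x, y}) = 2 := by
  have := finrank_span_eq_card (linearIndependent_pair_of_apply_eq_one hB hxy)
  rwa [Matrix.range_cons_cons_empty, Fintype.card_fin] at this

lemma nondegenerate_restrict_span_pair (hB : B.IsAlt) (hxy : B x y = 1) :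
    (B.restrict (Submodule.span K {x, y})).Nondegenerate := by
  refine B.nondegenerate_restrict_of_disjoint_orthogonal hB.isRefl ?_
  refine Submodule.disjoint_def.mpr fun v hv hvo => ?_
  obtain ⟨a, b, rfl⟩ := Submodule.mem_span_pair.mp hv
  have := apply_smul_add_smul_of_apply_eq_one hB hxy a b
  rw [hvo x (Submodule.subset_span (by simp)), hvo y (Submodule.subset_span (by simp))] at this
  simp [neg_eq_zero.mp this.2.symm, this.1.symm]

lemma exists_apply_eq_one (hB : B.Nondegenerate) [Nontrivial V] : ∃ x y, B x y = 1 := by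
  obtain ⟨x, hx⟩ := exists_ne (0 : V)
  obtain ⟨y, hy⟩ : ∃ y, B x y ≠ 0 := by
    by_contra! h
    exact hx (hB.1 x h)
  exact ⟨x, (B x y)⁻¹ • y, by simp [hy]⟩

section FiniteDimensional

variable [FiniteDimensional K V]

lemma nondegenerate_restrict_orthogonal (hB : B.Nondegenerate) (hrefl : B.IsRefl)
    {W : Submodule K V} (hW : (B.restrict W).Nondegenerate) :
    (B.restrict (B.orthogonal W)).Nondegenerate := by
  rw [restrict_nondegenerate_iff_isCompl_orthogonal hrefl, orthogonal_orthogonal hB hrefl]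
  exact (isCompl_orthogonal_of_restrict_nondegenerate hrefl hW).symm

theorem exists_symplecticBasis (hB : B.IsAlt) (hnd : B.Nondegenerate) {k : ℕ}
    (hdim : finrank K V = 2 * k) :
    ∃ e f : Fin k → V, ∀ i j, B (e i) (e j) = 0 ∧ B (f i) (f j) = 0 ∧
      B (e i) (f j) = if i = j then 1 else 0 := by
  induction k generalizing V with
  | zero => exact ⟨Fin.elim0, Fin.elim0, fun i => i.elim0⟩
  | succ k ih =>
    have : Nontrivial V := (finrank_pos_iff (R := K)).mp (by omega)
    obtain ⟨x, y, hxy⟩ := exists_apply_eq_one hnd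
    set W := B.orthogonal (Submodule.span K {x, y})
    have hW : (B.restrict W).Nondegenerate :=
      nondegenerate_restrict_orthogonal hnd hB.isRefl (nondegenerate_restrict_span_pair hB hxy)
    have hWdim : finrank K W = 2 * k := by
      rw [finrank_orthogonal hnd, finrank_span_pair_of_apply_eq_one hB hxy]
      omega
    obtain ⟨e, f, hef⟩ := ih (B := B.restrict W) (fun w => hB w) hW hWdim
    have hxw (w : W) : B x w = 0 := w.2 x (Submodule.subset_span (by simp))
    have hyw (w : W) : B y w = 0 := w.2 y (Submodule.subset_span (by simp))
    have hwx (w : W) : B w x = 0 := hB.isRefl _ _ (hxw w)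
    have hwy (w : W) : B w y = 0 := hB.isRefl _ _ (hyw w)
    refine ⟨Fin.cons x fun i => e i, Fin.cons y fun i => f i, ?_⟩
    simp only [Fin.forall_fin_succ, Fin.cons_zero, Fin.cons_succ, hB.self_eq_zero, hxy,
      hxw, hyw, hwx, hwy, Fin.succ_ne_zero, (Fin.succ_ne_zero _).symm, Fin.succ_inj]
    simpa using hef

end FiniteDimensional

lemma apply_sumElim_eq_fromBlocks (hB : B.IsAlt) {k : ℕ} {e f : Fin k → V}
    (hef : ∀ i j, B (e i) (e j) = 0 ∧ B (f i) (f j) = 0 ∧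
      B (e i) (f j) = if i = j then 1 else 0)
    (a b : Fin k ⊕ Fin k) :
    B (Sum.elim e f a) (Sum.elim e f b) = Matrix.fromBlocks 0 1 (-1) 0 a b := by
  rcases a with i | i <;> rcases b with j | j
  · simp [(hef i j).1]
  · simp [(hef i j).2.2, Matrix.one_apply]
  · simp [← hB.neg_eq (e j), (hef j i).2.2, Matrix.one_apply, eq_comm]
  · simp [(hef i j).2.1]

end LinearMap.BilinForm

namespace Matrix

lemma mul_eq_self_of_columns_mem_range {R m ι : Type*} [CommRing R] [Fintype m]
    [DecidableEq m] {P : Matrix m m R} {U : Matrix m ι R} (hP : IsIdempotentElem P)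
    (hU : ∀ a, Uᵀ a ∈ LinearMap.range (toLin' P)) : P * U = U := by
  ext r a
  obtain ⟨u, hu⟩ := hU a
  have hcol : P *ᵥ Uᵀ a = Uᵀ a := by rw [← hu, toLin'_apply, mulVec_mulVec, hP.eq]
  simpa [mul_apply, mulVec, dotProduct] using congrFun hcol r

variable {K m : Type*} [Field K] [Fintype m] [DecidableEq m] {A : Matrix m m K}

theorem trace_eq_rank_of_isIdempotentElem (hA : IsIdempotentElem A) : A.trace = A.rank := by
  have hA' : IsIdempotentElem (toLin' A) := hA.map toLinAlgEquiv'
  rw [← trace_toLin'_eq, (LinearMap.IsIdempotentElem.isProj_range _ hA').trace, rank,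
    toLin'_apply']

theorem eq_zero_of_isIdempotentElem_of_trace_eq_zero [CharZero K] (hA : IsIdempotentElem A)
    (h : A.trace = 0) : A = 0 := by
  have hA' : IsIdempotentElem (toLin' A) := hA.map toLinAlgEquiv'
  rw [← trace_toLin'_eq, LinearMap.IsIdempotentElem.trace_eq_zero_iff hA'] at h
  exact toLin'.injective (by rw [h, map_zero])

end Matrix

lemma Jmat_transpose (m : ℕ) : (Jmat m)ᵀ = -Jmat m := by
  ext (i | i) (j | j) <;> simp [Jmat, Matrix.one_apply, eq_comm]

lemma Jmat_mul_Jmat (m : ℕ) : Jmat m * Jmat m = -1 := by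
  ext (i | i) (j | j) <;> simp [Jmat, Matrix.fromBlocks_multiply, Matrix.one_apply]

lemma Jmat_mul_transpose_Jmat (m : ℕ) : Jmat m * (Jmat m)ᵀ = 1 := by
  rw [Jmat_transpose, Matrix.mul_neg, Jmat_mul_Jmat, neg_neg]

lemma transpose_Jmat_mul_Jmat (m : ℕ) : (Jmat m)ᵀ * Jmat m = 1 := by
  rw [Jmat_transpose, Matrix.neg_mul, Jmat_mul_Jmat, neg_neg]

lemma sympInv_mul {n m k : ℕ} (A : Matrix (Fin n ⊕ Fin n) (Fin m ⊕ Fin m) ℝ)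
    (B : Matrix (Fin m ⊕ Fin m) (Fin k ⊕ Fin k) ℝ) :
    sympInv (A * B) = sympInv B * sympInv A := by
  simp only [sympInv, Matrix.transpose_mul, Matrix.mul_assoc]
  rw [← Matrix.mul_assoc (Jmat m), Jmat_mul_transpose_Jmat, Matrix.one_mul]

lemma sympInv_sympInv {n k : ℕ} (A : Matrix (Fin n ⊕ Fin n) (Fin k ⊕ Fin k) ℝ) :
    sympInv (sympInv A) = A := by
  simp only [sympInv, Matrix.transpose_mul, Matrix.transpose_transpose, Matrix.mul_assoc]
  rw [Jmat_mul_Jmat, ← Matrix.mul_assoc, ← Matrix.transpose_mul, Jmat_mul_Jmat]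
  simp

lemma isSelfAdjoint_Jmat_of_sympInv_eq_self {n : ℕ}
    {P : Matrix (Fin n ⊕ Fin n) (Fin n ⊕ Fin n) ℝ} (hP : sympInv P = P) :
    (Jmat n).IsSelfAdjoint P := by
  change Pᵀ * Jmat n = Jmat n * P
  conv_rhs => rw [← hP]
  rw [sympInv, ← Matrix.mul_assoc, ← Matrix.mul_assoc, Jmat_mul_transpose_Jmat, Matrix.one_mul]

lemma sympInv_mul_self_eq_one {n k : ℕ} {U : Matrix (Fin n ⊕ Fin n) (Fin k ⊕ Fin k) ℝ}
    (hU : Uᵀ * Jmat n * U = Jmat k) : sympInv U * U = 1 := by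
  rw [sympInv, Matrix.mul_assoc, Matrix.mul_assoc, ← Matrix.mul_assoc Uᵀ, hU,
    transpose_Jmat_mul_Jmat]

lemma isAlt_toBilin'_Jmat (n : ℕ) : (Jmat n).toBilin'.IsAlt := by
  intro x
  have h : x ⬝ᵥ Jmat n *ᵥ x = -(x ⬝ᵥ Jmat n *ᵥ x) := by
    conv_lhs => rw [dotProduct_mulVec, ← Matrix.mulVec_transpose, Jmat_transpose,
      Matrix.neg_mulVec, dotProduct_comm]
    rw [dotProduct_neg]
  rw [Matrix.toBilin'_apply']
  linarith

lemma nondegenerate_toBilin'_Jmat (n : ℕ) : (Jmat n).toBilin'.Nondegenerate :=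
  LinearMap.BilinForm.nondegenerate_toBilin'_of_det_ne_zero' _
    (Matrix.isUnit_det_of_right_inverse (B := -Jmat n) (by
      rw [Matrix.mul_neg, Jmat_mul_Jmat, neg_neg])).ne_zero

theorem exists_sympInv_mul_self_eq_one_of_restrict_nondegenerate {n k : ℕ}
    {V : Submodule ℝ (Fin n ⊕ Fin n → ℝ)}
    (hV : ((Jmat n).toBilin'.restrict V).Nondegenerate) (hdim : finrank ℝ V = 2 * k) :
    ∃ U : Matrix (Fin n ⊕ Fin n) (Fin k ⊕ Fin k) ℝ,
      sympInv U * U = 1 ∧ ∀ a, Uᵀ a ∈ V := by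
  have hVAlt : ((Jmat n).toBilin'.restrict V).IsAlt := fun v => isAlt_toBilin'_Jmat n v
  obtain ⟨e, f, hef⟩ := LinearMap.BilinForm.exists_symplecticBasis hVAlt hV hdim
  set v : Fin k ⊕ Fin k → Fin n ⊕ Fin n → ℝ := fun a => (Sum.elim e f a : V)
  refine ⟨(Matrix.of v)ᵀ, sympInv_mul_self_eq_one ?_, fun a => (Sum.elim e f a).2⟩
  ext a b
  calc ((Matrix.of v)ᵀᵀ * Jmat n * (Matrix.of v)ᵀ) a b = v a ⬝ᵥ Jmat n *ᵥ v b := by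
        simp only [Matrix.transpose_transpose, Matrix.mul_apply, dotProduct, Matrix.mulVec,
          Matrix.transpose_apply, Matrix.of_apply, Finset.mul_sum, Finset.sum_mul, mul_assoc]
        exact Finset.sum_comm
    _ = Jmat k a b := by
        have := LinearMap.BilinForm.apply_sumElim_eq_fromBlocks hVAlt hef a b
        rwa [LinearMap.BilinForm.restrict_apply, LinearMap.domRestrict_apply,
          Matrix.toBilin'_apply'] at this

lemma eq_mul_sympInv_of_mul_eq_self {n k : ℕ} {P : Matrix (Fin n ⊕ Fin n) (Fin n ⊕ Fin n) ℝ}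
    {U : Matrix (Fin n ⊕ Fin n) (Fin k ⊕ Fin k) ℝ} (hP2 : P * P = P) (hPplus : sympInv P = P)
    (hrank : P.rank = 2 * k) (hU : sympInv U * U = 1) (hPU : P * U = U) :
    P = U * sympInv U := by
  set Q := U * sympInv U
  have hQQ : Q * Q = Q := by
    simp only [Q, Matrix.mul_assoc, ← Matrix.mul_assoc (sympInv U) U, hU, Matrix.one_mul]
  have hPQ : P * Q = Q := by rw [← Matrix.mul_assoc, hPU]
  have hQP : Q * P = Q := by
    have := congrArg sympInv hPQ
    rwa [sympInv_mul, hPplus, sympInv_mul, sympInv_sympInv] at this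
  have hidem : IsIdempotentElem (P - Q) := by
    simp only [IsIdempotentElem, sub_mul, mul_sub, hP2, hPQ, hQP, hQQ]
    abel
  have htrace : (P - Q).trace = 0 := by
    rw [trace_sub, trace_eq_rank_of_isIdempotentElem hP2, hrank, trace_mul_comm, hU, trace_one]
    simp [two_mul]
  exact sub_eq_zero.mp (eq_zero_of_isIdempotentElem_of_trace_eq_zero hidem htrace)

theorem stmt_18 (n k : ℕ) (P : Matrix (Fin n ⊕ Fin n) (Fin n ⊕ Fin n) ℝ)
    (hP2 : P * P = P) (hPplus : sympInv P = P) (hrank : P.rank = 2 * k) :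
    ∃ U : Matrix (Fin n ⊕ Fin n) (Fin k ⊕ Fin k) ℝ,
      sympInv U * U = 1 ∧ P = U * sympInv U := by
  have hadj : LinearMap.IsAdjointPair (Jmat n).toBilin' (Jmat n).toBilin' (toLin' P) (toLin' P) :=
    (isAdjointPair_toLinearMap₂' _ _ _ _).mpr (isSelfAdjoint_Jmat_of_sympInv_eq_self hPplus)
  have hnd := LinearMap.BilinForm.nondegenerate_restrict_range_of_isIdempotentElem
    (nondegenerate_toBilin'_Jmat n) (isAlt_toBilin'_Jmat n).isRefl
    (show IsIdempotentElem (toLin' P) from IsIdempotentElem.map hP2 toLinAlgEquiv') hadj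
  obtain ⟨U, hU, hUcols⟩ := exists_sympInv_mul_self_eq_one_of_restrict_nondegenerate hnd hrank
  exact ⟨U, hU, eq_mul_sympInv_of_mul_eq_self hP2 hPplus hrank hU
    (mul_eq_self_of_columns_mem_range hP2 hUcols)⟩
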